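/- arXiv:gr-qc/0406120 — 2 statements merged into one kernel-verified Lean document; each statement's English description precedes it below -/
import Mathlib

section
/- Let Ṽ, Ω̃ : ℝ → ℝ be differentiable with Ṽ' = (2 − S̃)Ṽ and Ω̃' = 2[(q−2) + (2−S̃)Ṽ²/(1+Ṽ²)]Ω̃ where q(τ) ≤ 2, Ṽ(τ) ∈ [0,1), Ω̃(τ) ∈ (0,1], and S̃ continuous and bounded. Fix τ₀. Then there exists δ > 0 such that Ω̃(τ) ≥ δ for all τ ≤ τ₀, and ∫_{τ}^{τ₀} (2 − q(t)) dt is bounded uniformly in τ ≤ τ₀. -/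
/-!
Along the flow, `log Ω̃ - log (1 + Ṽ²)` has derivative `2 (q - 2)`: the `S̃`-dependent terms cancel
because `(2 - S̃) Ṽ = Ṽ'`. Hence `2 ∫_τ^{τ₀} (2 - q)` is the increment of this quantity, which is
at most `0` everywhere (as `Ω̃ ≤ 1`); this bounds the integral, and since the integral is
nonnegative it bounds `log Ω̃ (τ)` from below by the value of the quantity at `τ₀`.
-/

open Real intervalIntegral

theorem hasDerivAt_log_sub_log_one_add_sq {V Ω : ℝ → ℝ} {s q τ : ℝ}
    (hV : HasDerivAt V (s * V τ) τ)
    (hΩ : HasDerivAt Ω (2 * ((q - 2) + s * V τ ^ 2 / (1 + V τ ^ 2)) * Ω τ) τ)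
    (hΩpos : 0 < Ω τ) :
    HasDerivAt (fun t => log (Ω t) - log (1 + V t ^ 2)) (2 * (q - 2)) τ := by
  have hden : 0 < 1 + V τ ^ 2 := by positivity
  have hlogΩ := hΩ.log hΩpos.ne'
  have hlogV := ((hV.pow 2).const_add 1).log hden.ne'
  refine (hlogΩ.sub hlogV).congr_deriv ?_
  simp only [Pi.pow_apply]
  field_simp
  ring

theorem two_mul_integral_two_sub_eq {V Ω q S : ℝ → ℝ}
    (hV : Differentiable ℝ V) (hΩ : Differentiable ℝ Ω) (hq : Continuous q)
    (hΩpos : ∀ t, 0 < Ω t)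
    (hVode : ∀ t, deriv V t = (2 - S t) * V t)
    (hΩode : ∀ t, deriv Ω t = 2 * ((q t - 2) + (2 - S t) * V t ^ 2 / (1 + V t ^ 2)) * Ω t)
    (a b : ℝ) :
    2 * ∫ t in a..b, (2 - q t) =
      (log (Ω a) - log (1 + V a ^ 2)) - (log (Ω b) - log (1 + V b ^ 2)) := by
  have hderiv : ∀ t, HasDerivAt (fun t => log (Ω t) - log (1 + V t ^ 2)) (2 * (q t - 2)) t :=
    fun t => hasDerivAt_log_sub_log_one_add_sq (hVode t ▸ (hV t).hasDerivAt)
      (hΩode t ▸ (hΩ t).hasDerivAt) (hΩpos t)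
  have hFTC := integral_eq_sub_of_hasDerivAt (fun t _ => hderiv t)
    ((continuous_const.mul (hq.sub continuous_const)).intervalIntegrable a b)
  rw [← integral_const_mul, ← neg_sub, ← hFTC, ← integral_neg]
  congr 1 with t
  ring

theorem stmt_8_general (Vt Ωt q St : ℝ → ℝ)
    (hVt : Differentiable ℝ Vt) (hΩt : Differentiable ℝ Ωt)
    (hq : Continuous q) (hqle : ∀ τ, q τ ≤ 2)
    (hΩrange : ∀ τ, 0 < Ωt τ ∧ Ωt τ ≤ 1)
    (hVode : ∀ τ, deriv Vt τ = (2 - St τ) * Vt τ)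
    (hΩode : ∀ τ, deriv Ωt τ =
      2 * ((q τ - 2) + (2 - St τ) * (Vt τ)^2 / (1 + (Vt τ)^2)) * Ωt τ)
    (τ₀ : ℝ) :
    (∃ δ > 0, ∀ τ ≤ τ₀, δ ≤ Ωt τ) ∧
      (∃ M : ℝ, ∀ τ ≤ τ₀, ∫ t in τ..τ₀, (2 - q t) ≤ M) := by
  set L : ℝ → ℝ := fun t => log (Ωt t) - log (1 + Vt t ^ 2)
  have hL (τ : ℝ) : 2 * ∫ t in τ..τ₀, (2 - q t) = L τ - L τ₀ :=
    two_mul_integral_two_sub_eq hVt hΩt hq (fun t => (hΩrange t).1) hVode hΩode τ τ₀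
  have hlog_one_add_sq : ∀ τ, 0 ≤ log (1 + Vt τ ^ 2) :=
    fun τ => log_nonneg (le_add_of_nonneg_right (sq_nonneg _))
  have hL_nonpos : ∀ τ, L τ ≤ 0 := fun τ => by
    linarith [log_nonpos (hΩrange τ).1.le (hΩrange τ).2, hlog_one_add_sq τ]
  refine ⟨⟨exp (L τ₀), exp_pos _, fun τ hτ => ?_⟩, ⟨-L τ₀ / 2, fun τ _ => ?_⟩⟩
  · have hint : 0 ≤ ∫ t in τ..τ₀, (2 - q t) :=
      integral_nonneg hτ fun t _ => by linarith [hqle t]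
    calc exp (L τ₀) ≤ exp (log (Ωt τ)) := exp_le_exp.2 (by linarith [hL τ, hlog_one_add_sq τ])
      _ = Ωt τ := exp_log (hΩrange τ).1
  · linarith [hL τ, hL_nonpos τ]

theorem stmt_8 (Vt Ωt q St : ℝ → ℝ)
    (hVt : Differentiable ℝ Vt) (hΩt : Differentiable ℝ Ωt)
    (hq : Continuous q) (hSt : Continuous St) (hqle : ∀ τ, q τ ≤ 2)
    (C : ℝ) (hStbd : ∀ τ, |St τ| ≤ C)
    (hVrange : ∀ τ, 0 ≤ Vt τ ∧ Vt τ < 1)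
    (hΩrange : ∀ τ, 0 < Ωt τ ∧ Ωt τ ≤ 1)
    (hVode : ∀ τ, deriv Vt τ = (2 - St τ) * Vt τ)
    (hΩode : ∀ τ, deriv Ωt τ =
      2 * ((q τ - 2) + (2 - St τ) * (Vt τ)^2 / (1 + (Vt τ)^2)) * Ωt τ)
    (τ₀ : ℝ) :
    (∃ δ > 0, ∀ τ ≤ τ₀, δ ≤ Ωt τ) ∧
      (∃ M : ℝ, ∀ τ ≤ τ₀, ∫ t in τ..τ₀, (2 - q t) ≤ M) :=
  stmt_8_general Vt Ωt q St hVt hΩt hq hqle hΩrange hVode hΩode τ₀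
end

section
/- Let V : ℝ → [0,1) satisfy V' = [V(1−V²)/(1−(γ−1)V²)]·[(3γ−4) − S], where 1 < γ < 2 and S(τ) is continuous with |S(τ)| ≤ s₀ < 3γ−4 for all τ ≥ τ₁ (assuming γ > 4/3 so that 3γ−4 > 0). If 0 < V(τ₁) < 1, then V(τ) → 1 as τ → +∞. -/
/-! Since `1 - (γ - 1) V² ∈ (0, 1]` and `(3γ - 4) - S ≥ c := 3γ - 4 - s₀ > 0`, the tilt speed obeys
the differential inequality `V' ≥ c V (1 - V²)` from `τ₁` on. Hence `V` is nondecreasing there, and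
if it stayed below some `L < 1` its derivative would stay above `c V(τ₁) (1 - L²) > 0`, so `V` would
grow past `1`. -/

open Filter Set

lemma mul_le_tilt_rhs {γ v b c : ℝ} (hγ₁ : 1 ≤ γ) (hγ₂ : γ ≤ 2) (hv₀ : 0 ≤ v) (hv₁ : v < 1)
    (hc : 0 ≤ c) (hcb : c ≤ b) :
    c * (v * (1 - v ^ 2)) ≤ v * (1 - v ^ 2) / (1 - (γ - 1) * v ^ 2) * b := by
  have hnum : 0 ≤ v * (1 - v ^ 2) := mul_nonneg hv₀ (by nlinarith)
  have hden : 0 < 1 - (γ - 1) * v ^ 2 := by nlinarith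
  have hfactor : v * (1 - v ^ 2) ≤ v * (1 - v ^ 2) / (1 - (γ - 1) * v ^ 2) := by
    rw [le_div_iff₀ hden]
    exact mul_le_of_le_one_right hnum (by nlinarith)
  rw [mul_comm c]
  exact mul_le_mul hfactor hcb hc (div_nonneg hnum hden.le)

section LogisticLowerBound

variable {V : ℝ → ℝ} {c τ₁ : ℝ}

lemma monotoneOn_Ici_of_logistic_le_deriv (hV : Differentiable ℝ V)
    (hrange : ∀ τ ≥ τ₁, 0 ≤ V τ ∧ V τ < 1) (hc : 0 ≤ c)
    (hderiv : ∀ τ ≥ τ₁, c * (V τ * (1 - V τ ^ 2)) ≤ deriv V τ) :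
    MonotoneOn V (Ici τ₁) := by
  refine monotoneOn_of_deriv_nonneg (convex_Ici τ₁) hV.continuous.continuousOn
    hV.differentiableOn fun τ hτ => ?_
  rw [interior_Ici] at hτ
  obtain ⟨hV₀, hV₁⟩ := hrange τ hτ.le
  exact (mul_nonneg hc (mul_nonneg hV₀ (by nlinarith))).trans (hderiv τ hτ.le)

lemma exists_lt_of_logistic_le_deriv (hV : Differentiable ℝ V)
    (hrange : ∀ τ ≥ τ₁, 0 ≤ V τ ∧ V τ < 1) (hc : 0 < c)
    (hderiv : ∀ τ ≥ τ₁, c * (V τ * (1 - V τ ^ 2)) ≤ deriv V τ) (hinit : 0 < V τ₁)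
    {L : ℝ} (hL : L < 1) : ∃ τ ≥ τ₁, L < V τ := by
  by_contra! hbelow
  have hmono := monotoneOn_Ici_of_logistic_le_deriv hV hrange hc.le hderiv
  set δ := c * (V τ₁ * (1 - L ^ 2))
  have hL₀ : 0 < L := hinit.trans_le (hbelow τ₁ le_rfl)
  have hδ : 0 < δ := mul_pos hc (mul_pos hinit (by nlinarith))
  have hδ_le : ∀ τ ∈ interior (Ici τ₁), δ ≤ deriv V τ := by
    intro τ hτ
    rw [interior_Ici] at hτ
    have hV₀ : V τ₁ ≤ V τ := hmono self_mem_Ici (mem_Ici.2 hτ.le) hτ.le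
    have hVL : V τ ≤ L := hbelow τ hτ.le
    refine le_trans (mul_le_mul_of_nonneg_left ?_ hc.le) (hderiv τ hτ.le)
    exact mul_le_mul hV₀ (by nlinarith) (by nlinarith) (hinit.le.trans hV₀)
  -- linear growth at rate `δ` over a time `1 / δ` would lift `V` by `1`
  set τ₂ := τ₁ + 1 / δ
  have hτ₂ : τ₁ ≤ τ₂ := le_add_of_nonneg_right (one_div_pos.mpr hδ).le
  have hgrowth := (convex_Ici τ₁).mul_sub_le_image_sub_of_le_deriv hV.continuous.continuousOn
    hV.differentiableOn hδ_le τ₁ self_mem_Ici τ₂ hτ₂ hτ₂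
  have hstep : δ * (τ₂ - τ₁) = 1 := by simp only [τ₂, add_sub_cancel_left]; field_simp
  linarith [(hrange τ₂ hτ₂).2]

theorem tendsto_one_of_logistic_le_deriv (hV : Differentiable ℝ V)
    (hrange : ∀ τ ≥ τ₁, 0 ≤ V τ ∧ V τ < 1) (hc : 0 < c)
    (hderiv : ∀ τ ≥ τ₁, c * (V τ * (1 - V τ ^ 2)) ≤ deriv V τ) (hinit : 0 < V τ₁) :
    Tendsto V atTop (nhds 1) := by
  have hmono := monotoneOn_Ici_of_logistic_le_deriv hV hrange hc.le hderiv
  refine tendsto_order.2 ⟨fun L hL => ?_, fun U hU => ?_⟩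
  · obtain ⟨τ, hτ, hLτ⟩ := exists_lt_of_logistic_le_deriv hV hrange hc hderiv hinit hL
    filter_upwards [eventually_ge_atTop τ] with t ht
    exact hLτ.trans_le (hmono hτ (hτ.trans ht) ht)
  · filter_upwards [eventually_ge_atTop τ₁] with t ht
    exact (hrange t ht).2.trans hU

end LogisticLowerBound

theorem stmt_15_general (γ s₀ τ₁ : ℝ) (hγ : 1 < γ ∧ γ < 2)
    (V S : ℝ → ℝ) (hV : Differentiable ℝ V)
    (hVrange : ∀ τ, 0 ≤ V τ ∧ V τ < 1)
    (hs₀' : s₀ < 3*γ - 4)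
    (hSbd : ∀ τ ≥ τ₁, |S τ| ≤ s₀)
    (hode : ∀ τ, deriv V τ =
      V τ * (1 - (V τ)^2) / (1 - (γ - 1) * (V τ)^2) * ((3*γ - 4) - S τ))
    (hinit : 0 < V τ₁) :
    Tendsto V atTop (nhds 1) := by
  have hderiv : ∀ τ ≥ τ₁, (3*γ - 4 - s₀) * (V τ * (1 - V τ ^ 2)) ≤ deriv V τ := by
    intro τ hτ
    rw [hode τ]
    exact mul_le_tilt_rhs hγ.1.le hγ.2.le (hVrange τ).1 (hVrange τ).2 (by linarith)
      (by linarith [(abs_le.mp (hSbd τ hτ)).2])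
  exact tendsto_one_of_logistic_le_deriv hV (fun τ _ => hVrange τ) (by linarith) hderiv hinit

theorem stmt_15 (γ s₀ τ₁ : ℝ) (hγ : 1 < γ ∧ γ < 2) (hγ' : 4/3 < γ)
    (V S : ℝ → ℝ) (hV : Differentiable ℝ V)
    (hVrange : ∀ τ, 0 ≤ V τ ∧ V τ < 1)
    (hS : Continuous S) (hs₀ : 0 ≤ s₀) (hs₀' : s₀ < 3*γ - 4)
    (hSbd : ∀ τ ≥ τ₁, |S τ| ≤ s₀)
    (hode : ∀ τ, deriv V τ =
      V τ * (1 - (V τ)^2) / (1 - (γ - 1) * (V τ)^2) * ((3*γ - 4) - S τ))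
    (hinit : 0 < V τ₁) :
    Tendsto V atTop (nhds 1) :=
  stmt_15_general γ s₀ τ₁ hγ V S hV hVrange hs₀' hSbd hode hinit
end
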